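/- Consumption followed by production covers noop: for every assertion a and store s, with(s, consume(a)); with(s, produce(a)) ⇛ noop, where noop is the mutator that leaves the state unchanged. -/

import Mathlib

/- ## Outcomes, satisfaction, coverage, sequential composition -/

/-- An outcome over state space `S` with answers in `A`: a singleton, a demonic
choice over a family of outcomes, or an angelic choice over a family of outcomes. -/
inductive Outcome (S : Type) (A : Type) : Type 1 where
  | single (σ : S) (a : A)
  | demonic (I : Type) (f : I → Outcome S A)
  | angelic (I : Type) (f : I → Outcome S A)

namespace Outcome

/-- Satisfaction of a postcondition by an outcome. -/
def sat {S A : Type} : Outcome S A → (S → A → Prop) → Prop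
  | single σ a, Q => Q σ a
  | demonic _ f, Q => ∀ i, (f i).sat Q
  | angelic _ f, Q => ∃ i, (f i).sat Q

/-- Coverage of outcomes: `φ` covers `φ'` iff every postcondition satisfied by `φ`
is satisfied by `φ'`. -/
def cover {S A : Type} (φ φ' : Outcome S A) : Prop :=
  ∀ Q : S → A → Prop, φ.sat Q → φ'.sat Q

/-- Sequential composition (with answers) of an outcome with an answer-indexed
family of mutators. -/
def bind {S A S' B : Type} : Outcome S A → (A → S → Outcome S' B) → Outcome S' B
  | single σ a, C => C a σ
  | demonic I f, C => demonic I (fun i => (f i).bind C)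
  | angelic I f, C => angelic I (fun i => (f i).bind C)

end Outcome

/-- Failure: the angelic choice over zero alternatives. -/
def failO {S A : Type} : Outcome S A := .angelic PEmpty (fun x => x.elim)
/-- Nontermination: the demonic choice over zero alternatives. -/
def blockO {S A : Type} : Outcome S A := .demonic PEmpty (fun x => x.elim)
/-- Angelic guard: `⨁ P. φ`. -/
def aguard {S A : Type} (P : Prop) (φ : Outcome S A) : Outcome S A :=
  .angelic (PLift P) (fun _ => φ)
/-- Demonic guard: `⨂ P. φ`. -/
def dguard {S A : Type} (P : Prop) (φ : Outcome S A) : Outcome S A :=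
  .demonic (PLift P) (fun _ => φ)
/-- Binary demonic choice of outcomes. -/
def dchoiceO {S A : Type} (φ₁ φ₂ : Outcome S A) : Outcome S A :=
  .demonic Bool (fun t => if t then φ₁ else φ₂)

/-- Sequential composition of an answer-free outcome with a mutator: `φ; C`. -/
def oseq {S S' : Type} (φ : Outcome S Unit) (C : S → Outcome S' Unit) : Outcome S' Unit :=
  φ.bind (fun _ => C)

/-- Sequential composition of mutators with answers: `x ← C; C'(x)`. -/
def mbind {S S' S'' A B : Type} (C : S → Outcome S' A) (C' : A → S' → Outcome S'' B) :
    S → Outcome S'' B :=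
  fun σ => (C σ).bind C'

/-- Sequential composition `C; C'` where the first mutator is answer-free. -/
def mthen {S S' S'' A : Type} (C : S → Outcome S' Unit) (C' : S' → Outcome S'' A) :
    S → Outcome S'' A :=
  fun σ => (C σ).bind (fun _ => C')

/-- Side-effect-only sequential composition `C ;, C'`: run `C`, then `C'`, and keep
`C`'s answer. -/
def msideSeq {S S' S'' A : Type} (C : S → Outcome S' A) (C' : S' → Outcome S'' Unit) :
    S → Outcome S'' A :=
  fun σ => (C σ).bind (fun a σ' => (C' σ').bind (fun _ σ'' => .single σ'' a))

/-- Coverage of mutators, lifted pointwise from coverage of outcomes. -/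
def mcover {S S' A : Type} (C C' : S → Outcome S' A) : Prop :=
  ∀ σ, (C σ).cover (C' σ)

/-- Binary demonic choice of mutators. -/
def mdchoice {S S' A : Type} (C₁ C₂ : S → Outcome S' A) : S → Outcome S' A :=
  fun σ => dchoiceO (C₁ σ) (C₂ σ)

/- ## Syntax of the programming language and of assertions; semiconcrete states -/

/-- Integer expressions. -/
inductive IExp (V : Type) where
  | lit (z : ℤ)
  | var (x : V)
  | add (e₁ e₂ : IExp V)
  | sub (e₁ e₂ : IExp V)

/-- Boolean expressions. -/
inductive BExp (V : Type) where
  | eq (e₁ e₂ : IExp V)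
  | lt (e₁ e₂ : IExp V)
  | not (b : BExp V)

/-- Evaluation of an integer expression under a store. -/
def IExp.eval {V : Type} (s : V → ℤ) : IExp V → ℤ
  | .lit z => z
  | .var x => s x
  | .add e₁ e₂ => e₁.eval s + e₂.eval s
  | .sub e₁ e₂ => e₁.eval s - e₂.eval s

/-- Evaluation of a boolean expression under a store. -/
def BExp.eval {V : Type} (s : V → ℤ) : BExp V → Bool
  | .eq e₁ e₂ => decide (e₁.eval s = e₂.eval s)
  | .lt e₁ e₂ => decide (e₁.eval s < e₂.eval s)
  | .not b => !(b.eval s)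

/-- Predicate names: the built-in points-to and malloc-block predicates, plus
user-defined predicates drawn from `P`. -/
inductive PredName (P : Type) where
  | pts
  | mb
  | user (q : P)
deriving DecidableEq

/-- A chunk `p(v̄)`: a predicate name together with its integer arguments. -/
abbrev Chunk (P : Type) := PredName P × List ℤ

/-- A heap: a multiset of chunks. -/
abbrev Heap (P : Type) := Multiset (Chunk P)

/-- A (semiconcrete) state: a store paired with a heap. -/
abbrev SCState (V P : Type) := (V → ℤ) × Heap P

/-- Function update `f[x := v]`. -/
def updF {V α : Type} [DecidableEq V] (s : V → α) (x : V) (v : α) : V → α :=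
  fun y => if y = x then v else s y

/-- Function update by lists, `f[x̄ := v̄]`. -/
def updsF {V α : Type} [DecidableEq V] : (V → α) → List V → List α → (V → α)
  | s, [], _ => s
  | s, _ :: _, [] => s
  | s, x :: xs, v :: vs => updsF (updF s x v) xs vs

/-- Assertions: boolean expressions, predicate assertions with variable patterns,
separating conjunction, and conditional assertions. -/
inductive Assn (V P : Type) where
  | bexp (b : BExp V)
  | pred (p : PredName P) (es : List (IExp V)) (xs : List V)
  | star (a₁ a₂ : Assn V P)
  | ite (b : BExp V) (a₁ a₂ : Assn V P)

/- ## Semiconcrete auxiliary mutators; assertion consumption and production -/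

/-- `assume(b)`: blocks unless `b` evaluates to true. -/
def assumeB {V P : Type} (b : BExp V) : SCState V P → Outcome (SCState V P) Unit :=
  fun σ => dguard (b.eval σ.1 = true) (.single σ ())

/-- `assert(b)`: fails unless `b` evaluates to true. -/
def assertB {V P : Type} (b : BExp V) : SCState V P → Outcome (SCState V P) Unit :=
  fun σ => aguard (b.eval σ.1 = true) (.single σ ())

/-- Semiconcrete consumption of a multiset of chunks. -/
def consumeChunks {V P : Type} [DecidableEq P] (h' : Heap P) :
    SCState V P → Outcome (SCState V P) Unit :=
  fun σ => aguard (h' ≤ σ.2) (.single (σ.1, σ.2 - h') ())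

/-- Semiconcrete consumption of a single chunk. -/
def consumeChunk {V P : Type} [DecidableEq P] (α : Chunk P) :
    SCState V P → Outcome (SCState V P) Unit :=
  consumeChunks (α ::ₘ 0)

/-- Semiconcrete production of a multiset of chunks. -/
def produceChunks {V P : Type} (h' : Heap P) :
    SCState V P → Outcome (SCState V P) Unit :=
  fun σ => .single (σ.1, σ.2 + h') ()

/-- Semiconcrete production of a single chunk. -/
def produceChunk {V P : Type} (α : Chunk P) :
    SCState V P → Outcome (SCState V P) Unit :=
  produceChunks (α ::ₘ 0)

/-- The leak check: fails if the heap is nonempty, blocks otherwise. -/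
def leakcheck {V P : Type} : SCState V P → Outcome (SCState V P) Unit :=
  fun σ => aguard (σ.2 = 0) blockO

/-- The mutator that answers the current store. -/
def storeM {V P : Type} : SCState V P → Outcome (SCState V P) (V → ℤ) :=
  fun σ => .single σ σ.1

/-- `with(s', C)`: run `C` under store `s'`, then restore the original store,
answering `C`'s answer. -/
def withS {V P A : Type} (s' : V → ℤ) (C : SCState V P → Outcome (SCState V P) A) :
    SCState V P → Outcome (SCState V P) A :=
  fun σ => (C (s', σ.2)).bind (fun a σ' => .single (σ.1, σ'.2) a)

/-- The mutator that does nothing. -/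
def noop {V P : Type} : SCState V P → Outcome (SCState V P) Unit :=
  fun σ => .single σ ()

/-- Consumption of an assertion. -/
def consume {V P : Type} [DecidableEq V] [DecidableEq P] :
    Assn V P → SCState V P → Outcome (SCState V P) Unit
  | .bexp b => assertB b
  | .pred p es xs => fun σ =>
      .angelic {vs : List ℤ // vs.length = xs.length} (fun vs =>
        (consumeChunk (p, es.map (IExp.eval σ.1) ++ vs.1) σ).bind
          (fun _ σ' => .single (updsF σ'.1 xs vs.1, σ'.2) ()))
  | .star a₁ a₂ => mthen (consume a₁) (consume a₂)
  | .ite b a₁ a₂ =>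
      mdchoice (mthen (assumeB b) (consume a₁)) (mthen (assumeB (.not b)) (consume a₂))

/-- Production of an assertion. -/
def produce {V P : Type} [DecidableEq V] [DecidableEq P] :
    Assn V P → SCState V P → Outcome (SCState V P) Unit
  | .bexp b => assumeB b
  | .pred p es xs => fun σ =>
      .demonic {vs : List ℤ // vs.length = xs.length} (fun vs =>
        (produceChunk (p, es.map (IExp.eval σ.1) ++ vs.1) σ).bind
          (fun _ σ' => .single (updsF σ'.1 xs vs.1, σ'.2) ()))
  | .star a₁ a₂ => mthen (produce a₁) (produce a₂)
  | .ite b a₁ a₂ =>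
      mdchoice (mthen (assumeB b) (produce a₁)) (mthen (assumeB (.not b)) (produce a₂))

lemma Outcome.sat_bind {S A S' B : Type} (φ : Outcome S A) (C : A → S → Outcome S' B)
    (Q : S' → B → Prop) :
    (φ.bind C).sat Q ↔ φ.sat (fun σ a => (C a σ).sat Q) := by
  induction φ with
  | single σ a => rfl
  | demonic I f ih => simp only [Outcome.bind, Outcome.sat]; exact forall_congr' fun i => ih i
  | angelic I f ih => simp only [Outcome.bind, Outcome.sat]; exact exists_congr fun i => ih i

lemma consume_produce_key {V P : Type} [DecidableEq V] [DecidableEq P] (a : Assn V P) :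
    ∀ (s : V → ℤ) (h : Heap P) (Q : SCState V P → Unit → Prop),
      (consume a (s, h)).sat Q →
      ∃ (s' : V → ℤ) (m : Heap P), m ≤ h ∧ Q (s', h - m) () ∧
        ∀ (hf : Heap P) (R : SCState V P → Unit → Prop),
          (produce a (s, hf)).sat R → R (s', hf + m) () := by
  induction a with
  | bexp b =>
      intro s h Q hQ
      obtain ⟨⟨hb⟩, hQ⟩ := hQ
      refine ⟨s, 0, zero_le, by simpa [Outcome.sat] using hQ, ?_⟩
      intro hf R hR
      simpa [Outcome.sat] using hR (PLift.up hb)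
  | pred p es xs =>
      intro s h Q hQ
      obtain ⟨vs, ⟨hle⟩, hQ⟩ := hQ
      refine ⟨updsF s xs vs.1, (p, es.map (IExp.eval s) ++ vs.1) ::ₘ 0, hle, hQ, ?_⟩
      intro hf R hR
      exact hR vs
  | star a₁ a₂ ih₁ ih₂ =>
      intro s h Q hQ
      rw [show consume (a₁.star a₂) = mthen (consume a₁) (consume a₂) from rfl] at hQ
      rw [mthen, Outcome.sat_bind] at hQ
      obtain ⟨s₁, m₁, hm₁, hQ₁, hp₁⟩ := ih₁ s h _ hQ
      obtain ⟨s₂, m₂, hm₂, hQ₂, hp₂⟩ := ih₂ s₁ (h - m₁) _ hQ₁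
      refine ⟨s₂, m₁ + m₂, ?_, ?_, ?_⟩
      · rw [add_comm]; exact (le_tsub_iff_right hm₁).mp hm₂
      · rwa [← tsub_tsub]
      · intro hf R hR
        rw [show produce (a₁.star a₂) = mthen (produce a₁) (produce a₂) from rfl] at hR
        rw [mthen, Outcome.sat_bind] at hR
        have := hp₂ (hf + m₁) R (hp₁ hf _ hR)
        rwa [add_assoc] at this
  | ite b a₁ a₂ ih₁ ih₂ =>
      intro s h Q hQ
      by_cases hb : b.eval s = true
      · have h1 : (consume a₁ (s, h)).sat Q := by
          have := hQ true
          simp only [if_pos rfl, mthen, assumeB, dguard, Outcome.bind, Outcome.sat] at this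
          exact this ⟨hb⟩
        obtain ⟨s', m, hm, hQ', hp⟩ := ih₁ s h Q h1
        refine ⟨s', m, hm, hQ', ?_⟩
        intro hf R hR
        have := hR true
        simp only [if_pos rfl, mthen, assumeB, dguard, Outcome.bind, Outcome.sat] at this
        exact hp hf R (this ⟨hb⟩)
      · have hb' : (BExp.not b).eval s = true := by
          simp [BExp.eval, hb]
        have h1 : (consume a₂ (s, h)).sat Q := by
          have := hQ false
          simp only [if_neg (by simp : ¬(false = true)), mthen, assumeB, dguard,
            Outcome.bind, Outcome.sat] at this
          exact this ⟨hb'⟩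
        obtain ⟨s', m, hm, hQ', hp⟩ := ih₂ s h Q h1
        refine ⟨s', m, hm, hQ', ?_⟩
        intro hf R hR
        have := hR false
        simp only [if_neg (by simp : ¬(false = true)), mthen, assumeB, dguard,
          Outcome.bind, Outcome.sat] at this
        exact hp hf R (this ⟨hb'⟩)

/-- consumption followed by production covers `noop`. -/
theorem consume_then_produce {V P : Type} [DecidableEq V] [DecidableEq P]
    (a : Assn V P) (s : V → ℤ) :
    mcover (mthen (withS s (consume a)) (withS s (produce a))) (noop : SCState V P → _) := by
  intro σ Q hQ
  simp only [mthen, withS, Outcome.sat_bind, Outcome.sat] at hQ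
  obtain ⟨s', m, hm, hQ', hp⟩ := consume_produce_key a s σ.2 _ hQ
  have := hp (σ.2 - m) _ hQ'
  simp only [Outcome.sat_bind, Outcome.sat] at this
  rw [tsub_add_cancel_of_le hm] at this
  simpa [noop, Outcome.sat] using this
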